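/- arXiv:2408.02241 — 4 statements merged into one kernel-verified Lean document; each statement's English description precedes it below -/
import Mathlib

section
/- Let ε > 0, L ∈ ℕ, and let V_0, ..., V_L and C_0, ..., C_L be strictly positive real numbers. For every choice of strictly positive reals m_0, ..., m_L satisfying the sampling-error constraint Σ_{ℓ=0}^{L} V_ℓ / m_ℓ ≤ ε²/2, the total cost satisfies Σ_{ℓ=0}^{L} m_ℓ C_ℓ ≥ 2 ε^{-2} (Σ_{ℓ=0}^{L} √(C_ℓ V_ℓ))². Consequently the allocation n_ℓ = 2 ε^{-2} √(V_ℓ / C_ℓ) · Σ_{k=0}^{L} √(C_k V_k) minimizes the total cost among all allocations meeting the constraint. -/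
open Real Finset

/-! The lower bound is Cauchy–Schwarz applied to the factorisation
`√(C_ℓ V_ℓ) = √(V_ℓ / m_ℓ) · √(m_ℓ C_ℓ)`: it gives
`(∑ √(C_ℓ V_ℓ))² ≤ (∑ V_ℓ / m_ℓ) (∑ m_ℓ C_ℓ) ≤ ε²/2 · ∑ m_ℓ C_ℓ`.
An allocation proportional to `√(V_ℓ / C_ℓ)` makes both factorisations
`V_ℓ / n_ℓ` and `n_ℓ C_ℓ` multiples of `√(C_ℓ V_ℓ)`, which is the equality case. -/

theorem Real.sqrt_div_mul_self {v c : ℝ} (hc : 0 < c) : √(v / c) * c = √(c * v) := by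
  rw [show c * v = v / c * c ^ 2 by field_simp, Real.sqrt_mul' _ (sq_nonneg c),
    Real.sqrt_sq hc.le]

theorem Real.div_sqrt_div {v c : ℝ} (hv : 0 < v) (hc : 0 < c) : v / √(v / c) = √(c * v) := by
  rw [div_eq_iff (Real.sqrt_pos.2 (div_pos hv hc)).ne', ← Real.sqrt_mul (by positivity),
    show c * v * (v / c) = v ^ 2 by field_simp, Real.sqrt_sq hv.le]

theorem Finset.sq_sum_sqrt_mul_le_sum_div_mul_sum_mul {ι : Type*} (s : Finset ι)
    {v c m : ι → ℝ} (hv : ∀ i ∈ s, 0 ≤ v i) (hc : ∀ i ∈ s, 0 ≤ c i) (hm : ∀ i ∈ s, 0 < m i) :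
    (∑ i ∈ s, √(c i * v i)) ^ 2 ≤ (∑ i ∈ s, v i / m i) * ∑ i ∈ s, m i * c i :=
  sum_sq_le_sum_mul_sum_of_sq_le_mul s (fun i hi => div_nonneg (hv i hi) (hm i hi).le)
    (fun i hi => mul_nonneg (hm i hi).le (hc i hi)) fun i hi => by
      rw [Real.sq_sqrt (mul_nonneg (hc i hi) (hv i hi))]
      exact le_of_eq (by field_simp [(hm i hi).ne'])

section ProportionalAllocation

variable {ι : Type*} (s : Finset ι) (κ : ℝ) {v c : ι → ℝ}

theorem Finset.sum_div_mul_sqrt_div (hv : ∀ i ∈ s, 0 < v i) (hc : ∀ i ∈ s, 0 < c i) :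
    ∑ i ∈ s, v i / (κ * √(v i / c i)) = (∑ i ∈ s, √(c i * v i)) / κ := by
  rw [sum_div]
  refine sum_congr rfl fun i hi => ?_
  rw [div_mul_eq_div_div_swap, Real.div_sqrt_div (hv i hi) (hc i hi)]

theorem Finset.sum_mul_sqrt_div_mul (hc : ∀ i ∈ s, 0 < c i) :
    ∑ i ∈ s, κ * √(v i / c i) * c i = κ * ∑ i ∈ s, √(c i * v i) := by
  rw [mul_sum]
  refine sum_congr rfl fun i hi => ?_
  rw [mul_assoc, Real.sqrt_div_mul_self (hc i hi)]

end ProportionalAllocation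

/-- Optimality of the standard MLMC sample allocation: every positive allocation
meeting the sampling-error constraint `∑_ℓ V_ℓ / m_ℓ ≤ ε²/2` has total cost at
least `2 ε⁻² (∑_ℓ √(C_ℓ V_ℓ))²`, and the allocation
`n_ℓ = 2 ε⁻² √(V_ℓ/C_ℓ) ∑_k √(C_k V_k)` meets the constraint and attains this
cost, hence minimizes the total cost. -/
theorem mlmc_allocation_optimal (ε : ℝ) (hε : 0 < ε) (L : ℕ)
    (V C : Fin (L + 1) → ℝ) (hV : ∀ ℓ, 0 < V ℓ) (hC : ∀ ℓ, 0 < C ℓ)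
    (n : Fin (L + 1) → ℝ)
    (hn : ∀ ℓ, n ℓ = 2 * (ε ^ 2)⁻¹ * Real.sqrt (V ℓ / C ℓ) * ∑ k, Real.sqrt (C k * V k)) :
    (∀ m : Fin (L + 1) → ℝ, (∀ ℓ, 0 < m ℓ) → (∑ ℓ, V ℓ / m ℓ) ≤ ε ^ 2 / 2 →
        2 * (ε ^ 2)⁻¹ * (∑ ℓ, Real.sqrt (C ℓ * V ℓ)) ^ 2 ≤ ∑ ℓ, m ℓ * C ℓ) ∧
      (∀ ℓ, 0 < n ℓ) ∧
      (∑ ℓ, V ℓ / n ℓ) ≤ ε ^ 2 / 2 ∧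
      (∑ ℓ, n ℓ * C ℓ) = 2 * (ε ^ 2)⁻¹ * (∑ ℓ, Real.sqrt (C ℓ * V ℓ)) ^ 2 := by
  set S := ∑ k, √(C k * V k) with hS_def
  have hS : 0 < S := sum_pos (fun k _ => Real.sqrt_pos.2 (mul_pos (hC k) (hV k))) univ_nonempty
  obtain rfl : n = fun ℓ => 2 * (ε ^ 2)⁻¹ * S * √(V ℓ / C ℓ) := funext fun ℓ => by rw [hn]; ring
  refine ⟨fun m hm hsampling => ?_, fun ℓ => ?_, ?_, ?_⟩
  · calc 2 * (ε ^ 2)⁻¹ * S ^ 2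
        ≤ 2 * (ε ^ 2)⁻¹ * ((∑ ℓ, V ℓ / m ℓ) * ∑ ℓ, m ℓ * C ℓ) := by
          gcongr
          exact sq_sum_sqrt_mul_le_sum_div_mul_sum_mul _ (fun ℓ _ => (hV ℓ).le)
            (fun ℓ _ => (hC ℓ).le) fun ℓ _ => hm ℓ
      _ ≤ 2 * (ε ^ 2)⁻¹ * (ε ^ 2 / 2 * ∑ ℓ, m ℓ * C ℓ) := by
          gcongr
          exact sum_nonneg fun ℓ _ => (mul_pos (hm ℓ) (hC ℓ)).le
      _ = ∑ ℓ, m ℓ * C ℓ := by field_simp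
  · exact mul_pos (by positivity) (Real.sqrt_pos.2 (div_pos (hV ℓ) (hC ℓ)))
  · rw [sum_div_mul_sqrt_div _ _ (fun ℓ _ => hV ℓ) fun ℓ _ => hC ℓ, ← hS_def]
    exact le_of_eq (by field_simp)
  · rw [sum_mul_sqrt_div_mul _ _ fun ℓ _ => hC ℓ, ← hS_def]
    ring
end

section
/- (MLMC complexity, case β > γ.) Let α, β, γ, c₁, c₂, c₃ > 0 with β > γ and α ≥ γ/2 (i.e., α ≥ ½ min(β, γ)), and let s ≥ 2 be an integer. Then there exist constants ε₀ > 0 and c₄ > 0 such that for every ε ∈ (0, ε₀) there exist L ∈ ℕ and positive integers N_0, ..., N_L satisfying both the mean-square-error bound c₁² s^{-2αL} + Σ_{ℓ=0}^{L} c₂ s^{-β(L−ℓ)} / N_ℓ ≤ ε² and the total cost bound Σ_{ℓ=0}^{L} N_ℓ · c₃ s^{γ(L−ℓ)} ≤ c₄ ε^{-2}. -/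
/-!
Fix `δ` strictly between `γ` and `β` and take `N_ℓ = ⌈M s^{-δ(L-ℓ)}⌉` with `M` of order `ε⁻²`.
The variance terms then decay like `s^{-(β-δ)(L-ℓ)}` and the cost terms like `s^{-(δ-γ)(L-ℓ)}`,
so both sums are geometric series bounded independently of `L`. Rounding up costs at most one
extra sample per level, i.e. `≲ s^{γL} ≤ s^{2αL}`, and this is `≲ ε⁻²` when `L` is the first level
at which the bias `c₁² s^{-2αL}` drops below `ε²/2`.
-/

open Real Finset

namespace MLMC

variable {s : ℝ}

lemma rpow_mul_natCast_sub (hs : 0 ≤ s) (x : ℝ) {L ℓ : ℕ} (hℓ : ℓ ≤ L) :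
    s ^ (x * ((L : ℝ) - ℓ)) = (s ^ x) ^ (L - ℓ) := by
  rw [← Nat.cast_sub hℓ, rpow_mul hs, rpow_natCast]

lemma sum_range_succ_rpow_mul_sub (hs : 0 ≤ s) (x : ℝ) (L : ℕ) :
    ∑ ℓ ∈ range (L + 1), s ^ (x * ((L : ℝ) - ℓ)) = ∑ k ∈ range (L + 1), (s ^ x) ^ k := by
  refine (sum_congr rfl fun ℓ hℓ => ?_).trans (sum_range_reflect (fun k => (s ^ x) ^ k) _)
  rw [rpow_mul_natCast_sub hs x (Nat.lt_succ_iff.mp (mem_range.mp hℓ)), Nat.add_sub_cancel]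

lemma geom_sum_le_inv_one_sub {x : ℝ} (h0 : 0 ≤ x) (h1 : x < 1) (n : ℕ) :
    ∑ i ∈ range n, x ^ i ≤ (1 - x)⁻¹ := by
  have h := geom_sum_Ico_le_of_lt_one (m := 0) (n := n) h0 h1
  rwa [← range_eq_Ico, pow_zero, one_div] at h

lemma inv_one_sub_rpow_neg_pos (hs : 1 < s) {x : ℝ} (hx : 0 < x) : 0 < (1 - s ^ (-x))⁻¹ :=
  inv_pos.mpr (sub_pos.mpr (rpow_lt_one_of_one_lt_of_neg hs (neg_neg_of_pos hx)))

lemma sum_range_succ_rpow_neg_mul_sub_le (hs : 1 < s) {x : ℝ} (hx : 0 < x) (L : ℕ) :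
    ∑ ℓ ∈ range (L + 1), s ^ (-(x * ((L : ℝ) - ℓ))) ≤ (1 - s ^ (-x))⁻¹ := by
  simp_rw [← neg_mul]
  rw [sum_range_succ_rpow_mul_sub (by linarith) (-x) L]
  exact geom_sum_le_inv_one_sub (rpow_nonneg (by linarith) _)
    (rpow_lt_one_of_one_lt_of_neg hs (neg_neg_of_pos hx)) _

lemma sum_range_succ_rpow_mul_sub_le (hs : 1 < s) {x : ℝ} (hx : 0 < x) (L : ℕ) :
    ∑ ℓ ∈ range (L + 1), s ^ (x * ((L : ℝ) - ℓ)) ≤ s ^ (x * L) * (1 - s ^ (-x))⁻¹ := by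
  have hs0 : 0 < s := by linarith
  have hterm : ∀ ℓ : ℕ, s ^ (x * ((L : ℝ) - ℓ)) = s ^ (x * L) * (s ^ (-x)) ^ ℓ := fun ℓ => by
    rw [← rpow_natCast, ← rpow_mul hs0.le, ← rpow_add hs0]
    ring_nf
  simp_rw [hterm, ← mul_sum]
  exact mul_le_mul_of_nonneg_left (geom_sum_le_inv_one_sub (rpow_nonneg hs0.le _)
    (rpow_lt_one_of_one_lt_of_neg hs (neg_neg_of_pos hx)) _) (rpow_pos_of_pos hs0 _).le

lemma exists_nat_rpow_mul_near (hs : 1 < s) {x B : ℝ} (hx : 0 < x) (hB : 1 ≤ B) :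
    ∃ L : ℕ, B ≤ s ^ (x * L) ∧ s ^ (x * L) ≤ s ^ x * B := by
  obtain ⟨n, hn, hn'⟩ := exists_nat_pow_near hB (one_lt_rpow hs hx)
  refine ⟨n + 1, ?_, ?_⟩ <;> rw [rpow_mul (by linarith), rpow_natCast]
  · exact hn'.le
  · rw [pow_succ']
    exact mul_le_mul_of_nonneg_left hn (rpow_pos_of_pos (by linarith) _).le

lemma mul_rpow_neg_le_div_of_le_rpow (hs : 0 < s) {c B x : ℝ} (hc : 0 ≤ c) (hB : 0 < B)
    (h : B ≤ s ^ x) : c * s ^ (-x) ≤ c / B := by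
  rw [rpow_neg hs.le, ← div_eq_mul_inv]
  exact div_le_div_of_nonneg_left hc hB h

noncomputable def sampleCount (M δ s : ℝ) (L ℓ : ℕ) : ℕ := ⌈M * s ^ (-(δ * ((L : ℝ) - ℓ)))⌉₊

variable {M δ : ℝ} {L : ℕ}

lemma sampleCount_pos (hM : 0 < M) (hs : 0 < s) (ℓ : ℕ) : 0 < sampleCount M δ s L ℓ :=
  Nat.ceil_pos.mpr (mul_pos hM (rpow_pos_of_pos hs _))

lemma sum_variance_div_sampleCount_le {β c : ℝ} (hs : 1 < s) (hδβ : δ < β) (hc : 0 ≤ c)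
    (hM : 0 < M) :
    ∑ ℓ ∈ range (L + 1), c * s ^ (-(β * ((L : ℝ) - ℓ))) / sampleCount M δ s L ℓ
      ≤ c / M * (1 - s ^ (-(β - δ)))⁻¹ := by
  have hs0 : 0 < s := by linarith
  have hterm : ∀ ℓ : ℕ, c * s ^ (-(β * ((L : ℝ) - ℓ))) / sampleCount M δ s L ℓ
      ≤ c / M * s ^ (-((β - δ) * ((L : ℝ) - ℓ))) := fun ℓ => by
    calc c * s ^ (-(β * ((L : ℝ) - ℓ))) / sampleCount M δ s L ℓ
        ≤ c * s ^ (-(β * ((L : ℝ) - ℓ))) / (M * s ^ (-(δ * ((L : ℝ) - ℓ)))) :=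
          div_le_div_of_nonneg_left (by positivity) (by positivity) (Nat.le_ceil _)
      _ = c / M * s ^ (-((β - δ) * ((L : ℝ) - ℓ))) := by
          rw [show -((β - δ) * ((L : ℝ) - ℓ)) = -(β * ((L : ℝ) - ℓ)) - -(δ * ((L : ℝ) - ℓ)) by
            ring, rpow_sub hs0]
          field_simp
  calc _ ≤ ∑ ℓ ∈ range (L + 1), c / M * s ^ (-((β - δ) * ((L : ℝ) - ℓ))) :=
        sum_le_sum fun ℓ _ => hterm ℓ
    _ = c / M * ∑ ℓ ∈ range (L + 1), s ^ (-((β - δ) * ((L : ℝ) - ℓ))) := (mul_sum ..).symm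
    _ ≤ c / M * (1 - s ^ (-(β - δ)))⁻¹ := by
        gcongr
        exact sum_range_succ_rpow_neg_mul_sub_le hs (sub_pos.mpr hδβ) L

lemma sum_sampleCount_mul_cost_le {γ c : ℝ} (hs : 1 < s) (hγ : 0 < γ) (hγδ : γ < δ)
    (hc : 0 ≤ c) (hM : 0 ≤ M) :
    ∑ ℓ ∈ range (L + 1), (sampleCount M δ s L ℓ : ℝ) * (c * s ^ (γ * ((L : ℝ) - ℓ)))
      ≤ c * M * (1 - s ^ (-(δ - γ)))⁻¹ + c * (s ^ (γ * L) * (1 - s ^ (-γ))⁻¹) := by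
  have hs0 : 0 < s := by linarith
  have hterm : ∀ ℓ : ℕ, (sampleCount M δ s L ℓ : ℝ) * (c * s ^ (γ * ((L : ℝ) - ℓ)))
      ≤ c * M * s ^ (-((δ - γ) * ((L : ℝ) - ℓ))) + c * s ^ (γ * ((L : ℝ) - ℓ)) := fun ℓ => by
    calc (sampleCount M δ s L ℓ : ℝ) * (c * s ^ (γ * ((L : ℝ) - ℓ)))
        ≤ (M * s ^ (-(δ * ((L : ℝ) - ℓ))) + 1) * (c * s ^ (γ * ((L : ℝ) - ℓ))) := by
          gcongr
          exact (Nat.ceil_lt_add_one (by positivity)).le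
      _ = _ := by
          rw [show -((δ - γ) * ((L : ℝ) - ℓ)) = -(δ * ((L : ℝ) - ℓ)) + γ * ((L : ℝ) - ℓ) by
            ring, rpow_add hs0]
          ring
  calc _ ≤ ∑ ℓ ∈ range (L + 1), (c * M * s ^ (-((δ - γ) * ((L : ℝ) - ℓ)))
        + c * s ^ (γ * ((L : ℝ) - ℓ))) := sum_le_sum fun ℓ _ => hterm ℓ
    _ = c * M * ∑ ℓ ∈ range (L + 1), s ^ (-((δ - γ) * ((L : ℝ) - ℓ)))
        + c * ∑ ℓ ∈ range (L + 1), s ^ (γ * ((L : ℝ) - ℓ)) := by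
        rw [sum_add_distrib, mul_sum, mul_sum]
    _ ≤ _ := by
        gcongr
        · exact sum_range_succ_rpow_neg_mul_sub_le hs (sub_pos.mpr hγδ) L
        · exact sum_range_succ_rpow_mul_sub_le hs hγ L

end MLMC

open MLMC in
theorem mlmc_complexity_beta_gt_gamma_general
    (α β γ c₁ c₂ c₃ : ℝ)
    (hα : 0 < α) (hγ : 0 < γ)
    (hc₁ : 0 < c₁) (hc₂ : 0 < c₂) (hc₃ : 0 < c₃)
    (hβγ : γ < β) (hαγ : γ / 2 ≤ α)
    (s : ℕ) (hs : 2 ≤ s) :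
    ∃ ε₀ c₄ : ℝ, 0 < ε₀ ∧ 0 < c₄ ∧
      ∀ ε : ℝ, 0 < ε → ε < ε₀ →
        ∃ (L : ℕ) (N : ℕ → ℕ), (∀ ℓ ≤ L, 0 < N ℓ) ∧
          c₁ ^ 2 * (s : ℝ) ^ (-(2 * α * (L : ℝ))) +
              (∑ ℓ ∈ Finset.range (L + 1),
                c₂ * (s : ℝ) ^ (-(β * ((L : ℝ) - (ℓ : ℝ)))) / (N ℓ : ℝ)) ≤ ε ^ 2 ∧
          (∑ ℓ ∈ Finset.range (L + 1),
              (N ℓ : ℝ) * (c₃ * (s : ℝ) ^ (γ * ((L : ℝ) - (ℓ : ℝ)))))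
            ≤ c₄ * ε ^ (-2 : ℝ) := by
  have hs1 : (1 : ℝ) < s := by exact_mod_cast hs
  have hs0 : (0 : ℝ) < s := by linarith
  obtain ⟨δ, hγδ, hδβ⟩ := exists_between hβγ
  set ρβ := (1 - (s : ℝ) ^ (-(β - δ)))⁻¹
  set ρδ := (1 - (s : ℝ) ^ (-(δ - γ)))⁻¹
  set ργ := (1 - (s : ℝ) ^ (-γ))⁻¹
  have hρβ : 0 < ρβ := inv_one_sub_rpow_neg_pos hs1 (sub_pos.mpr hδβ)
  have hρδ : 0 < ρδ := inv_one_sub_rpow_neg_pos hs1 (sub_pos.mpr hγδ)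
  have hργ : 0 < ργ := inv_one_sub_rpow_neg_pos hs1 hγ
  refine ⟨c₁, 2 * c₃ * (c₂ * ρβ * ρδ + c₁ ^ 2 * (s : ℝ) ^ (2 * α) * ργ), hc₁, by positivity,
    fun ε hε hεc₁ => ?_⟩
  have hB : 1 ≤ 2 * c₁ ^ 2 / ε ^ 2 := by
    rw [le_div_iff₀ (by positivity)]
    nlinarith
  obtain ⟨L, hBL, hLB⟩ := exists_nat_rpow_mul_near hs1 (by positivity : 0 < 2 * α) hB
  set M := 2 * c₂ * ρβ / ε ^ 2 with hM_def
  have hM : 0 < M := by positivity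
  refine ⟨L, sampleCount M δ s L, fun ℓ _ => sampleCount_pos hM hs0 ℓ, ?_, ?_⟩
  · have hbias := mul_rpow_neg_le_div_of_le_rpow hs0 (sq_nonneg c₁) (by positivity) hBL
    have hvar := sum_variance_div_sampleCount_le (L := L) hs1 hδβ hc₂.le hM
    have hsplit : c₁ ^ 2 / (2 * c₁ ^ 2 / ε ^ 2) + c₂ / M * ρβ = ε ^ 2 := by
      rw [hM_def]; field_simp; ring
    linarith
  · have hcost := sum_sampleCount_mul_cost_le (L := L) hs1 hγ hγδ hc₃.le hM.le
    have hγL : (s : ℝ) ^ (γ * L) ≤ (s : ℝ) ^ (2 * α) * (2 * c₁ ^ 2 / ε ^ 2) :=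
      (rpow_le_rpow_of_exponent_le hs1.le (by gcongr; linarith)).trans hLB
    rw [rpow_neg hε.le, rpow_two]
    calc _ ≤ _ := hcost
      _ ≤ c₃ * M * ρδ + c₃ * ((s : ℝ) ^ (2 * α) * (2 * c₁ ^ 2 / ε ^ 2) * ργ) := by gcongr
      _ = _ := by rw [hM_def]; field_simp

/-- MLMC complexity theorem, arithmetic core, case `β > γ`: for a geometric mesh
hierarchy `M_ℓ = s^(L-ℓ)`, for all sufficiently small `ε` one can choose a number
of levels `L` and positive sample counts `N_ℓ` so that the mean square error
bound `c₁² s^{-2αL} + ∑_ℓ c₂ s^{-β(L-ℓ)}/N_ℓ ≤ ε²` holds with total cost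
`∑_ℓ N_ℓ c₃ s^{γ(L-ℓ)} ≤ c₄ ε⁻²`. -/
theorem mlmc_complexity_beta_gt_gamma
    (α β γ c₁ c₂ c₃ : ℝ)
    (hα : 0 < α) (hβ : 0 < β) (hγ : 0 < γ)
    (hc₁ : 0 < c₁) (hc₂ : 0 < c₂) (hc₃ : 0 < c₃)
    (hβγ : γ < β) (hαγ : γ / 2 ≤ α)
    (s : ℕ) (hs : 2 ≤ s) :
    ∃ ε₀ c₄ : ℝ, 0 < ε₀ ∧ 0 < c₄ ∧
      ∀ ε : ℝ, 0 < ε → ε < ε₀ →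
        ∃ (L : ℕ) (N : ℕ → ℕ), (∀ ℓ ≤ L, 0 < N ℓ) ∧
          c₁ ^ 2 * (s : ℝ) ^ (-(2 * α * (L : ℝ))) +
              (∑ ℓ ∈ Finset.range (L + 1),
                c₂ * (s : ℝ) ^ (-(β * ((L : ℝ) - (ℓ : ℝ)))) / (N ℓ : ℝ)) ≤ ε ^ 2 ∧
          (∑ ℓ ∈ Finset.range (L + 1),
              (N ℓ : ℝ) * (c₃ * (s : ℝ) ^ (γ * ((L : ℝ) - (ℓ : ℝ)))))
            ≤ c₄ * ε ^ (-2 : ℝ) :=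
  mlmc_complexity_beta_gt_gamma_general α β γ c₁ c₂ c₃ hα hγ hc₁ hc₂ hc₃ hβγ hαγ s hs
end

section
/- (MLMC complexity, case β < γ.) Let α, β, γ, c₁, c₂, c₃ > 0 with β < γ and α ≥ β/2 (i.e., α ≥ ½ min(β, γ)), and let s ≥ 2 be an integer. Then there exist constants ε₀ > 0 and c₄ > 0 such that for every ε ∈ (0, ε₀) there exist L ∈ ℕ and positive integers N_0, ..., N_L satisfying both the mean-square-error bound c₁² s^{-2αL} + Σ_{ℓ=0}^{L} c₂ s^{-β(L−ℓ)} / N_ℓ ≤ ε² and the total cost bound Σ_{ℓ=0}^{L} N_ℓ · c₃ s^{γ(L−ℓ)} ≤ c₄ ε^{-2-(γ−β)/α}. -/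
/-!
Take the number of levels `L` minimal (up to one level) with bias `c₁² s^{-2αL} ≤ ε²/2`, so that
`s^L ≍ ε^{-1/α}`. Given positive weights `w_ℓ`, the sample sizes `N_ℓ ≈ 2 ε^{-2} (V_ℓ / w_ℓ) ∑ w`
make the variance at most `ε²/2` at cost `2 ε^{-2} (∑ w) (∑ V_ℓ C_ℓ / w_ℓ) + ∑ C_ℓ`; with
`w_ℓ = √(V_ℓ C_ℓ) ∝ s^{(γ-β)(L-ℓ)/2}` and `β < γ` all these sums are geometric and dominated by
the finest level, giving cost `≲ ε^{-2} s^{(γ-β)L} + s^{γL} ≍ ε^{-2-(γ-β)/α} + ε^{-γ/α}`. The last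
term is absorbed by the first because `β ≤ 2α`.
-/

open Real Finset

theorem exists_sample_sizes {ι : Type*} (t : Finset ι) (V C w : ι → ℝ)
    (hV : ∀ i, 0 ≤ V i) (hC : ∀ i, 0 ≤ C i) (hw : ∀ i, 0 < w i) {δ : ℝ} (hδ : 0 < δ) :
    ∃ N : ι → ℕ, (∀ i, 0 < N i) ∧ ∑ i ∈ t, V i / N i ≤ δ ∧
      ∑ i ∈ t, N i * C i ≤ (∑ i ∈ t, w i) * (∑ i ∈ t, V i * C i / w i) / δ + ∑ i ∈ t, C i := by
  set W := ∑ i ∈ t, w i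
  set x : ι → ℝ := fun i ↦ W * V i / (δ * w i) with hx_def
  have hW : ∀ i ∈ t, 0 < W := fun i hi ↦
    (hw i).trans_le (single_le_sum (fun j _ ↦ (hw j).le) hi)
  have hδx : ∀ i, δ * w i * x i = W * V i := fun i ↦ by
    have := hw i
    rw [hx_def]; field_simp
  refine ⟨fun i ↦ ⌊x i⌋₊ + 1, fun i ↦ Nat.succ_pos _, ?_, ?_⟩
  · calc ∑ i ∈ t, V i / (⌊x i⌋₊ + 1 : ℕ) ≤ ∑ i ∈ t, δ * w i / W := by
          refine sum_le_sum fun i hi ↦ ?_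
          have hWi := hW i hi
          have hwi := hw i
          rw [div_le_div_iff₀ (by positivity) hWi, mul_comm (V i), ← hδx]
          gcongr
          exact_mod_cast (Nat.lt_floor_add_one _).le
      _ = δ * W / W := by rw [← sum_div, ← mul_sum]
      _ ≤ δ := div_le_of_le_mul₀ (sum_nonneg fun i _ ↦ (hw i).le) hδ.le le_rfl
  · calc ∑ i ∈ t, ((⌊x i⌋₊ + 1 : ℕ) : ℝ) * C i ≤ ∑ i ∈ t, (x i + 1) * C i := by
          refine sum_le_sum fun i hi ↦ ?_
          have hWi := hW i hi
          have hwi := hw i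
          have hVi := hV i
          have hCi := hC i
          push_cast
          gcongr
          exact Nat.floor_le (by rw [hx_def]; positivity)
      _ = W * (∑ i ∈ t, V i * C i / w i) / δ + ∑ i ∈ t, C i := by
          rw [mul_sum, sum_div, ← sum_add_distrib]
          refine sum_congr rfl fun i _ ↦ ?_
          have := hw i
          rw [hx_def]; field_simp

theorem one_sub_rpow_neg_pos {x a : ℝ} (hx : 1 < x) (ha : 0 < a) : 0 < 1 - x ^ (-a) :=
  sub_pos.2 (rpow_lt_one_of_one_lt_of_neg hx (neg_neg_of_pos ha))

theorem sum_range_rpow_mul_sub_le {x a : ℝ} (hx : 1 < x) (ha : 0 < a) (L : ℕ) :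
    ∑ ℓ ∈ range (L + 1), x ^ (a * ((L : ℝ) - ℓ)) ≤ (x ^ L) ^ a / (1 - x ^ (-a)) := by
  have hx0 : 0 ≤ x := by linarith
  have hterm : ∀ ℓ : ℕ, x ^ (a * ((L : ℝ) - ℓ)) = (x ^ L) ^ a * (x ^ (-a)) ^ ℓ := fun ℓ ↦ by
    rw [← rpow_natCast_mul hx0, ← rpow_mul_natCast hx0, ← rpow_add (by linarith)]
    ring_nf
  simp_rw [hterm]
  rw [← mul_sum, ← mul_one_div]
  gcongr
  simpa using geom_sum_Ico_le_of_lt_one (m := 0) (n := L + 1) (rpow_nonneg hx0 _)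
    (sub_pos.1 (one_sub_rpow_neg_pos hx ha))

theorem exists_nat_pow_mem_Icc {x y : ℝ} (hx : 1 < x) (hy : 1 ≤ y) :
    ∃ n : ℕ, y ≤ x ^ n ∧ x ^ n ≤ x * y := by
  obtain ⟨n, hle, hlt⟩ := exists_nat_pow_near hy hx
  exact ⟨n + 1, hlt.le, by rw [pow_succ']; gcongr⟩

theorem exists_sample_sizes_geometric {x β γ c₂ c₃ δ : ℝ} (hx : 1 < x) (hβγ : β < γ)
    (hγ : 0 < γ) (hc₂ : 0 ≤ c₂) (hc₃ : 0 ≤ c₃) (hδ : 0 < δ) (L : ℕ) :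
    ∃ N : ℕ → ℕ, (∀ ℓ, 0 < N ℓ) ∧
      ∑ ℓ ∈ range (L + 1), c₂ * x ^ (-(β * ((L : ℝ) - ℓ))) / N ℓ ≤ δ ∧
      ∑ ℓ ∈ range (L + 1), (N ℓ : ℝ) * (c₃ * x ^ (γ * ((L : ℝ) - ℓ))) ≤
        c₂ * c₃ * (x ^ L) ^ (γ - β) / ((1 - x ^ (-((γ - β) / 2))) ^ 2 * δ) +
          c₃ * ((x ^ L) ^ γ / (1 - x ^ (-γ))) := by
  have hx0 : 0 < x := by linarith
  set b := (γ - β) / 2 with hb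
  have hb0 : 0 < b := by linarith
  -- weights `w_ℓ ∝ √(V_ℓ C_ℓ)`, i.e. the classical allocation `N_ℓ ∝ √(V_ℓ / C_ℓ)`
  obtain ⟨N, hN, hvar, hcost⟩ := exists_sample_sizes (range (L + 1))
    (fun ℓ : ℕ ↦ c₂ * x ^ (-(β * ((L : ℝ) - ℓ)))) (fun ℓ : ℕ ↦ c₃ * x ^ (γ * ((L : ℝ) - ℓ)))
    (fun ℓ : ℕ ↦ x ^ (b * ((L : ℝ) - ℓ))) (fun ℓ ↦ by positivity) (fun ℓ ↦ by positivity)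
    (fun ℓ ↦ by positivity) hδ
  refine ⟨N, hN, hvar, hcost.trans ?_⟩
  have hVCw : ∀ ℓ : ℕ, c₂ * x ^ (-(β * ((L : ℝ) - ℓ))) * (c₃ * x ^ (γ * ((L : ℝ) - ℓ))) /
      x ^ (b * ((L : ℝ) - ℓ)) = c₂ * c₃ * x ^ (b * ((L : ℝ) - ℓ)) := fun ℓ ↦ by
    have hexp : -(β * ((L : ℝ) - ℓ)) + γ * ((L : ℝ) - ℓ) =
        b * ((L : ℝ) - ℓ) + b * ((L : ℝ) - ℓ) := by ring
    rw [mul_mul_mul_comm, ← rpow_add hx0, hexp, rpow_add hx0]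
    field_simp
  have hq := one_sub_rpow_neg_pos hx hb0
  have hW := sum_range_rpow_mul_sub_le hx hb0 L
  have hW0 : 0 ≤ ∑ ℓ ∈ range (L + 1), x ^ (b * ((L : ℝ) - ℓ)) := by positivity
  have hMb : ((x ^ L) ^ b) ^ 2 = (x ^ L) ^ (γ - β) := by
    rw [← rpow_natCast, ← rpow_mul (by positivity)]
    congr 1
    push_cast
    ring
  simp_rw [hVCw]
  rw [← mul_sum, ← mul_sum]
  gcongr ?_ + c₃ * ?_
  · calc (∑ ℓ ∈ range (L + 1), x ^ (b * ((L : ℝ) - ℓ))) *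
          (c₂ * c₃ * ∑ ℓ ∈ range (L + 1), x ^ (b * ((L : ℝ) - ℓ))) / δ
        = c₂ * c₃ * (∑ ℓ ∈ range (L + 1), x ^ (b * ((L : ℝ) - ℓ))) ^ 2 / δ := by ring
      _ ≤ c₂ * c₃ * ((x ^ L) ^ b / (1 - x ^ (-b))) ^ 2 / δ := by gcongr
      _ = _ := by rw [div_pow, hMb]; field_simp
  · exact sum_range_rpow_mul_sub_le hx hγ L

theorem exists_num_levels {x α c ε : ℝ} (hx : 1 < x) (hα : 0 < α) (hε : 0 < ε) (hεc : ε ≤ c) :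
    ∃ L : ℕ, c ^ 2 * x ^ (-(2 * α * L)) ≤ ε ^ 2 / 2 ∧
      ∀ t, 0 ≤ t → (x ^ L) ^ t ≤ x ^ t * (2 * c ^ 2) ^ (t / (2 * α)) * ε ^ (-(t / α)) := by
  have hc : 0 < c := hε.trans_le hεc
  set D := 2 * c ^ 2 / ε ^ 2 with hD
  have hD1 : 1 ≤ D := by
    rw [hD, one_le_div (by positivity)]
    nlinarith
  set Y := D ^ (2 * α)⁻¹ with hY
  obtain ⟨L, hYL, hLY⟩ := exists_nat_pow_mem_Icc (y := Y) hx (one_le_rpow hD1 (by positivity))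
  have hY0 : 0 < Y := by positivity
  refine ⟨L, ?_, fun t ht ↦ ?_⟩
  · have hYα : Y ^ (2 * α) = D := rpow_inv_rpow (by positivity) (by positivity)
    have hML : (x ^ L) ^ (2 * α) ≥ D := hYα ▸ rpow_le_rpow hY0.le hYL (by positivity)
    rw [show -(2 * α * L) = L * -(2 * α) by ring, rpow_natCast_mul (by positivity),
      rpow_neg (by positivity)]
    calc c ^ 2 * ((x ^ L) ^ (2 * α))⁻¹ ≤ c ^ 2 * D⁻¹ := by gcongr
      _ = ε ^ 2 / 2 := by rw [hD]; field_simp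
  · calc (x ^ L) ^ t ≤ (x * Y) ^ t := rpow_le_rpow (by positivity) hLY ht
      _ = x ^ t * (2 * c ^ 2) ^ (t / (2 * α)) * ε ^ (-(t / α)) := by
        have hε2 : (ε ^ 2) ^ (t / (2 * α)) = ε ^ (t / α) := by
          rw [← rpow_natCast, ← rpow_mul hε.le]
          congr 1
          field_simp
          ring
        rw [mul_rpow (by positivity) hY0.le, hY, ← rpow_mul (by positivity), hD,
          div_rpow (by positivity) (by positivity), inv_mul_eq_div, hε2, rpow_neg hε.le]
        ring

theorem rpow_neg_div_le_rpow_neg_two_sub {ε α β γ : ℝ} (hε : 0 < ε) (hε1 : ε ≤ 1) (hα : 0 < α)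
    (hαβ : β / 2 ≤ α) : ε ^ (-(γ / α)) ≤ ε ^ (-2 - (γ - β) / α) := by
  refine rpow_le_rpow_of_exponent_ge hε hε1 ?_
  have hβα : β / α ≤ 2 := by rw [div_le_iff₀ hα]; linarith
  rw [sub_div]
  linarith

theorem mlmc_complexity_beta_lt_gamma_general
    (α β γ c₁ c₂ c₃ : ℝ)
    (hα : 0 < α) (hγ : 0 < γ)
    (hc₁ : 0 < c₁) (hc₂ : 0 < c₂) (hc₃ : 0 < c₃)
    (hβγ : β < γ) (hαβ : β / 2 ≤ α)
    (s : ℕ) (hs : 2 ≤ s) :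
    ∃ ε₀ c₄ : ℝ, 0 < ε₀ ∧ 0 < c₄ ∧
      ∀ ε : ℝ, 0 < ε → ε < ε₀ →
        ∃ (L : ℕ) (N : ℕ → ℕ), (∀ ℓ ≤ L, 0 < N ℓ) ∧
          c₁ ^ 2 * (s : ℝ) ^ (-(2 * α * (L : ℝ))) +
              (∑ ℓ ∈ Finset.range (L + 1),
                c₂ * (s : ℝ) ^ (-(β * ((L : ℝ) - (ℓ : ℝ)))) / (N ℓ : ℝ)) ≤ ε ^ 2 ∧
          (∑ ℓ ∈ Finset.range (L + 1),
              (N ℓ : ℝ) * (c₃ * (s : ℝ) ^ (γ * ((L : ℝ) - (ℓ : ℝ)))))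
            ≤ c₄ * ε ^ (-2 - (γ - β) / α) := by
  have hs1 : (1 : ℝ) < s := by exact_mod_cast hs
  have hqb := one_sub_rpow_neg_pos hs1 (half_pos (sub_pos.2 hβγ))
  have hqγ := one_sub_rpow_neg_pos hs1 hγ
  set A := 2 * c₂ * c₃ * (s : ℝ) ^ (γ - β) * (2 * c₁ ^ 2) ^ ((γ - β) / (2 * α)) /
    (1 - (s : ℝ) ^ (-((γ - β) / 2))) ^ 2 with hA
  set B := c₃ * (s : ℝ) ^ γ * (2 * c₁ ^ 2) ^ (γ / (2 * α)) / (1 - (s : ℝ) ^ (-γ)) with hB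
  refine ⟨min 1 c₁, A + B, by positivity, by positivity, fun ε hε hε₀ ↦ ?_⟩
  obtain ⟨L, hbias, hpowL⟩ := exists_num_levels hs1 hα hε (hε₀.le.trans (min_le_right _ _))
  obtain ⟨N, hN, hvar, hcost⟩ :=
    exists_sample_sizes_geometric hs1 hβγ hγ hc₂.le hc₃.le (half_pos (pow_pos hε 2)) L
  refine ⟨L, N, fun ℓ _ ↦ hN ℓ, by linarith, hcost.trans ?_⟩
  have hrate : ε ^ (-((γ - β) / α)) / ε ^ 2 = ε ^ (-2 - (γ - β) / α) := by
    rw [show -2 - (γ - β) / α = -((γ - β) / α) - 2 by ring, rpow_sub hε, rpow_two]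
  calc _ ≤ c₂ * c₃ * ((s : ℝ) ^ (γ - β) * (2 * c₁ ^ 2) ^ ((γ - β) / (2 * α)) *
          ε ^ (-((γ - β) / α))) / ((1 - (s : ℝ) ^ (-((γ - β) / 2))) ^ 2 * (ε ^ 2 / 2)) +
        c₃ * ((s : ℝ) ^ γ * (2 * c₁ ^ 2) ^ (γ / (2 * α)) * ε ^ (-(γ / α)) /
          (1 - (s : ℝ) ^ (-γ))) := by
        gcongr
        exacts [hpowL _ (by linarith), hpowL _ hγ.le]
    _ = A * (ε ^ (-((γ - β) / α)) / ε ^ 2) + B * ε ^ (-(γ / α)) := by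
        rw [hA, hB]
        field_simp
    _ ≤ (A + B) * ε ^ (-2 - (γ - β) / α) := by
        rw [hrate, add_mul]
        gcongr _ + B * ?_
        exact rpow_neg_div_le_rpow_neg_two_sub hε (hε₀.le.trans (min_le_left _ _)) hα hαβ

/-- MLMC complexity theorem, arithmetic core, case `β < γ`: for a geometric mesh
hierarchy `M_ℓ = s^(L-ℓ)`, for all sufficiently small `ε` one can choose a number
of levels `L` and positive sample counts `N_ℓ` so that
`c₁² s^{-2αL} + ∑_ℓ c₂ s^{-β(L-ℓ)}/N_ℓ ≤ ε²` holds with total cost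
`∑_ℓ N_ℓ c₃ s^{γ(L-ℓ)} ≤ c₄ ε^{-2-(γ-β)/α}`. -/
theorem mlmc_complexity_beta_lt_gamma
    (α β γ c₁ c₂ c₃ : ℝ)
    (hα : 0 < α) (hβ : 0 < β) (hγ : 0 < γ)
    (hc₁ : 0 < c₁) (hc₂ : 0 < c₂) (hc₃ : 0 < c₃)
    (hβγ : β < γ) (hαβ : β / 2 ≤ α)
    (s : ℕ) (hs : 2 ≤ s) :
    ∃ ε₀ c₄ : ℝ, 0 < ε₀ ∧ 0 < c₄ ∧
      ∀ ε : ℝ, 0 < ε → ε < ε₀ →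
        ∃ (L : ℕ) (N : ℕ → ℕ), (∀ ℓ ≤ L, 0 < N ℓ) ∧
          c₁ ^ 2 * (s : ℝ) ^ (-(2 * α * (L : ℝ))) +
              (∑ ℓ ∈ Finset.range (L + 1),
                c₂ * (s : ℝ) ^ (-(β * ((L : ℝ) - (ℓ : ℝ)))) / (N ℓ : ℝ)) ≤ ε ^ 2 ∧
          (∑ ℓ ∈ Finset.range (L + 1),
              (N ℓ : ℝ) * (c₃ * (s : ℝ) ^ (γ * ((L : ℝ) - (ℓ : ℝ)))))
            ≤ c₄ * ε ^ (-2 - (γ - β) / α) :=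
  mlmc_complexity_beta_lt_gamma_general α β γ c₁ c₂ c₃ hα hγ hc₁ hc₂ hc₃ hβγ hαβ s hs
end

section
/- Let R be a commutative ring, let D (fine global dofs), D^c (coarse global dofs) be finite index types, and let 𝒯 be a finite index set of agglomerated elements. For each T ∈ 𝒯 let d_T and d_T^c be finite index types (local fine and coarse dofs of T), and let R_T : Matrix d_T D R (fine restriction), R_T^c : Matrix d_T^c D^c R (coarse restriction), A_T : Matrix d_T d_T R (local element matrix), and P_T : Matrix d_T d_T^c R (local interpolation) be given. Let P : Matrix D D^c R be a global interpolation matrix. Assume (i) the global matrix assembles from the local matrices, A = Σ_{T∈𝒯} R_Tᵀ ⬝ A_T ⬝ R_T, and (ii) the conformity condition R_T ⬝ P = P_T ⬝ R_T^c holds for every T ∈ 𝒯. Then the global coarse matrix P ᵀ ⬝ A ⬝ P equals the matrix assembled from the local coarse element matrices A_T^c = P_Tᵀ ⬝ A_T ⬝ P_T, namely Pᵀ ⬝ A ⬝ P = Σ_{T∈𝒯} (R_T^c)ᵀ ⬝ (P_Tᵀ ⬝ A_T ⬝ P_T) ⬝ R_T^c. -/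
/-! Galerkin products `Pᵀ A P` commute with sums and compose, `Pᵀ (Rᵀ A R) P = (R P)ᵀ A (R P)`,
so by conformity each assembled summand becomes `(P_T R_Tᶜ)ᵀ A_T (P_T R_Tᶜ)`. -/

open Matrix

namespace Matrix

variable {α m n p ι : Type*} [CommSemiring α] [Fintype m]

def galerkin (A : Matrix m m α) (P : Matrix m n α) : Matrix n n α :=
  Pᵀ * A * P

theorem galerkin_sum (s : Finset ι) (A : ι → Matrix m m α) (P : Matrix m n α) :
    galerkin (∑ i ∈ s, A i) P = ∑ i ∈ s, galerkin (A i) P := by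
  simp only [galerkin, Matrix.mul_sum, Matrix.sum_mul]

theorem galerkin_galerkin [Fintype n] (A : Matrix m m α) (R : Matrix m n α)
    (P : Matrix n p α) : galerkin (galerkin A R) P = galerkin A (R * P) := by
  simp only [galerkin, transpose_mul, Matrix.mul_assoc]

end Matrix

theorem amge_coarse_assembly_general
    {R : Type*} [CommRing R]
    {D Dc : Type*} [Fintype D]
    {𝒯 : Type*} [Fintype 𝒯]
    (dT dTc : 𝒯 → Type*) [∀ T, Fintype (dT T)] [∀ T, Fintype (dTc T)]
    (Rt : ∀ T, Matrix (dT T) D R)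
    (Rtc : ∀ T, Matrix (dTc T) Dc R)
    (At : ∀ T, Matrix (dT T) (dT T) R)
    (Pt : ∀ T, Matrix (dT T) (dTc T) R)
    (P : Matrix D Dc R) (A : Matrix D D R)
    (hA : A = ∑ T, (Rt T)ᵀ * At T * Rt T)
    (hconf : ∀ T, Rt T * P = Pt T * Rtc T) :
    Pᵀ * A * P = ∑ T, (Rtc T)ᵀ * ((Pt T)ᵀ * At T * Pt T) * Rtc T := by
  subst hA
  change galerkin (∑ T, galerkin (At T) (Rt T)) P
    = ∑ T, galerkin (galerkin (At T) (Pt T)) (Rtc T)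
  simp only [galerkin_sum, galerkin_galerkin, hconf]

/-- AMGe conformity: if the global matrix `A` assembles from local element
matrices `A_T` via restrictions `R_T`, and the global interpolation `P` agrees
with the local interpolations `P_T` after restriction
(`R_T ⬝ P = P_T ⬝ R_T^c`), then the global coarse matrix `Pᵀ ⬝ A ⬝ P` equals
the matrix assembled from the local coarse element matrices
`A_T^c = P_Tᵀ ⬝ A_T ⬝ P_T`. -/
theorem amge_coarse_assembly
    {R : Type*} [CommRing R]
    {D Dc : Type*} [Fintype D] [Fintype Dc] [DecidableEq D] [DecidableEq Dc]
    {𝒯 : Type*} [Fintype 𝒯]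
    (dT dTc : 𝒯 → Type*) [∀ T, Fintype (dT T)] [∀ T, Fintype (dTc T)]
    [∀ T, DecidableEq (dT T)] [∀ T, DecidableEq (dTc T)]
    (Rt : ∀ T, Matrix (dT T) D R)
    (Rtc : ∀ T, Matrix (dTc T) Dc R)
    (At : ∀ T, Matrix (dT T) (dT T) R)
    (Pt : ∀ T, Matrix (dT T) (dTc T) R)
    (P : Matrix D Dc R) (A : Matrix D D R)
    (hA : A = ∑ T, (Rt T)ᵀ * At T * Rt T)
    (hconf : ∀ T, Rt T * P = Pt T * Rtc T) :
    Pᵀ * A * P = ∑ T, (Rtc T)ᵀ * ((Pt T)ᵀ * At T * Pt T) * Rtc T :=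
  amge_coarse_assembly_general dT dTc Rt Rtc At Pt P A hA hconf
end
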